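/- Let (Z_n, ρ_n), n ≥ 1, be a sequence of compact semi-metric spaces. If (Z_n, ρ_n) AI-converges both to a compact semi-metric space (Z, ρ_0) and to a compact semi-metric space (Z', ρ_0'), then (Z, ρ_0) and (Z', ρ_0') are isometric: there exists a surjective map f : Z' → Z with ρ_0(f(ξ),f(η)) = ρ_0'(ξ,η) for all ξ,η ∈ Z'. -/

import Mathlib

open Filter Topology Metric
open scoped ENNReal

universe u v

/-- A semi-metric (separating function) on a compact metrizable space: continuous, symmetric,
nonnegative, and vanishing exactly on the diagonal. -/
def IsSemiMetric {Z : Type*} [TopologicalSpace Z] (ρ : Z → Z → ℝ) : Prop :=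
  Continuous (Function.uncurry ρ) ∧ (∀ ξ η, ρ ξ η = ρ η ξ) ∧
    (∀ ξ η, 0 ≤ ρ ξ η) ∧ ∀ ξ η, ρ ξ η = 0 ↔ ξ = η

/-- An antipodal function: a semi-metric of diameter at most one such that every point has an
antipode at distance one. -/
def IsAntipodalFn {Z : Type*} [TopologicalSpace Z] (ρ : Z → Z → ℝ) : Prop :=
  IsSemiMetric ρ ∧ (∀ ξ η, ρ ξ η ≤ 1) ∧ ∀ ξ, ∃ η, ρ ξ η = 1

/-- An `ε`-isometry between semi-metric spaces: distortion less than `ε`, and the image is an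
`ε`-net. -/
def IsEpsIsometry {Z₁ : Type*} {Z₂ : Type*} (ρ₁ : Z₁ → Z₁ → ℝ) (ρ₂ : Z₂ → Z₂ → ℝ)
    (ε : ℝ) (f : Z₁ → Z₂) : Prop :=
  (∀ ξ η : Z₁, |ρ₂ (f ξ) (f η) - ρ₁ ξ η| < ε) ∧ ∀ ζ : Z₂, ∃ ξ : Z₁, ρ₂ (f ξ) ζ < ε

/-- The almost-isometry (AI) distance between two semi-metric spaces: the infimum of all `ε > 0`
for which there are `ε`-isometries in both directions (`∞` if there are none). -/
noncomputable def dAI {Z₁ : Type*} {Z₂ : Type*} (ρ₁ : Z₁ → Z₁ → ℝ) (ρ₂ : Z₂ → Z₂ → ℝ) : ℝ≥0∞ :=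
  ⨅ (ε : ℝ) (_ : 0 < ε) (_ : ∃ f : Z₁ → Z₂, IsEpsIsometry ρ₁ ρ₂ ε f)
    (_ : ∃ g : Z₂ → Z₁, IsEpsIsometry ρ₂ ρ₁ ε g), ENNReal.ofReal ε

/- Passing through a common approximant `Z n`, the AI-convergence gives maps
`F m : W' → W` whose distortion tends to zero and whose images are "two-step" nets with mesh
tending to zero (a semi-metric has no triangle inequality, so the two steps cannot be merged).
Along an ultrafilter finer than `atTop` the maps `F m` converge pointwise in the compact space `W`;
the limit `f` preserves the semi-metrics by continuity, and it is onto because a continuous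
semi-metric separates limits: if `ρ (a i) (b i) → 0`, `a i → x` and `b i → y`, then `x = y`. -/

namespace IsSemiMetric

variable {W : Type*} [TopologicalSpace W] {ρ : W → W → ℝ}

theorem continuous (hρ : IsSemiMetric ρ) : Continuous (Function.uncurry ρ) := hρ.1

theorem nonneg (hρ : IsSemiMetric ρ) (ξ η : W) : 0 ≤ ρ ξ η := hρ.2.2.1 ξ η

theorem eq_zero_iff (hρ : IsSemiMetric ρ) {ξ η : W} : ρ ξ η = 0 ↔ ξ = η := hρ.2.2.2 ξ η

theorem self_eq_zero (hρ : IsSemiMetric ρ) (ξ : W) : ρ ξ ξ = 0 := hρ.eq_zero_iff.2 rfl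

theorem tendsto_comp {ι : Type*} {l : Filter ι} (hρ : IsSemiMetric ρ) {a b : ι → W} {x y : W}
    (ha : Tendsto a l (𝓝 x)) (hb : Tendsto b l (𝓝 y)) :
    Tendsto (fun i => ρ (a i) (b i)) l (𝓝 (ρ x y)) :=
  (hρ.continuous.tendsto (x, y)).comp (ha.prodMk_nhds hb)

theorem eq_of_tendsto_zero {ι : Type*} {l : Filter ι} [l.NeBot] (hρ : IsSemiMetric ρ)
    {a b : ι → W} {x y : W} (ha : Tendsto a l (𝓝 x)) (hb : Tendsto b l (𝓝 y))
    (hab : Tendsto (fun i => ρ (a i) (b i)) l (𝓝 0)) : x = y :=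
  hρ.eq_zero_iff.1 (tendsto_nhds_unique (hρ.tendsto_comp ha hb) hab)

end IsSemiMetric

section EpsIsometry

variable {Z₁ Z₂ Z₃ : Type*} {ρ₁ : Z₁ → Z₁ → ℝ} {ρ₂ : Z₂ → Z₂ → ℝ} {ρ₃ : Z₃ → Z₃ → ℝ} {ε : ℝ}

theorem IsEpsIsometry.mono {ε' : ℝ} {f : Z₁ → Z₂} (hf : IsEpsIsometry ρ₁ ρ₂ ε f)
    (hε : ε ≤ ε') : IsEpsIsometry ρ₁ ρ₂ ε' f :=
  ⟨fun ξ η => (hf.1 ξ η).trans_le hε, fun ζ =>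
    let ⟨ξ, hξ⟩ := hf.2 ζ
    ⟨ξ, hξ.trans_le hε⟩⟩

theorem exists_isEpsIsometry_of_dAI_lt (hε : 0 < ε) (hd : dAI ρ₁ ρ₂ < ENNReal.ofReal ε) :
    (∃ f : Z₁ → Z₂, IsEpsIsometry ρ₁ ρ₂ ε f) ∧ ∃ g : Z₂ → Z₁, IsEpsIsometry ρ₂ ρ₁ ε g := by
  simp only [dAI, iInf_lt_iff] at hd
  obtain ⟨ε', -, ⟨f, hf⟩, ⟨g, hg⟩, hε'⟩ := hd
  have hle : ε' ≤ ε := ((ENNReal.ofReal_lt_ofReal_iff hε).1 hε').le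
  exact ⟨⟨f, hf.mono hle⟩, ⟨g, hg.mono hle⟩⟩

variable {f : Z₂ → Z₃} {g : Z₁ → Z₂}

theorem IsEpsIsometry.abs_comp_sub_lt (hf : IsEpsIsometry ρ₂ ρ₃ ε f)
    (hg : IsEpsIsometry ρ₁ ρ₂ ε g) (ξ η : Z₁) :
    |ρ₃ (f (g ξ)) (f (g η)) - ρ₁ ξ η| < 2 * ε :=
  calc |ρ₃ (f (g ξ)) (f (g η)) - ρ₁ ξ η|
      ≤ |ρ₃ (f (g ξ)) (f (g η)) - ρ₂ (g ξ) (g η)| + |ρ₂ (g ξ) (g η) - ρ₁ ξ η| :=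
        abs_sub_le _ _ _
    _ < ε + ε := add_lt_add (hf.1 _ _) (hg.1 ξ η)
    _ = 2 * ε := by ring

theorem IsEpsIsometry.exists_comp_near (hf : IsEpsIsometry ρ₂ ρ₃ ε f)
    (hg : IsEpsIsometry ρ₁ ρ₂ ε g) (ζ : Z₃) :
    ∃ ξ : Z₁, ∃ x : Z₃, ρ₃ (f (g ξ)) x < 2 * ε ∧ ρ₃ x ζ < ε := by
  obtain ⟨z, hz⟩ := hf.2 ζ
  obtain ⟨ξ, hξ⟩ := hg.2 z
  refine ⟨ξ, f z, ?_, hz⟩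
  linarith [(abs_lt.1 (hf.1 (g ξ) z)).2]

end EpsIsometry

theorem exists_surjective_isometry_of_approx {ι : Type*} {l : Filter ι} [l.NeBot]
    {W W' : Type*} [TopologicalSpace W] [CompactSpace W] [TopologicalSpace W'] [CompactSpace W']
    {ρ₀ : W → W → ℝ} {ρ₀' : W' → W' → ℝ} (hρ₀ : IsSemiMetric ρ₀) (hρ₀' : IsSemiMetric ρ₀')
    {F : ι → W' → W} {δ : ι → ℝ} (hδ : Tendsto δ l (𝓝 0))
    (hdist : ∀ i ξ η, |ρ₀ (F i ξ) (F i η) - ρ₀' ξ η| < δ i)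
    (hnet : ∀ i ζ, ∃ ξ : W', ∃ x : W, ρ₀ (F i ξ) x < δ i ∧ ρ₀ x ζ < δ i) :
    ∃ f : W' → W, Function.Surjective f ∧ ∀ ξ η : W', ρ₀ (f ξ) (f η) = ρ₀' ξ η := by
  set U : Ultrafilter ι := Ultrafilter.of l
  have hUl : (U : Filter ι) ≤ l := Ultrafilter.of_le l
  have hδU := hδ.mono_left hUl
  have tendsto_zero_of_lt {a b : ι → W} (hab : ∀ i, ρ₀ (a i) (b i) < δ i) :
      Tendsto (fun i => ρ₀ (a i) (b i)) U (𝓝 0) :=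
    squeeze_zero (fun i => hρ₀.nonneg _ _) (fun i => (hab i).le) hδU
  set f : W' → W := fun ξ => (U.map fun i => F i ξ).lim
  have hf (ξ : W') : Tendsto (fun i => F i ξ) U (𝓝 (f ξ)) :=
    (U.map fun i => F i ξ).le_nhds_lim
  have hiso (ξ η : W') : ρ₀ (f ξ) (f η) = ρ₀' ξ η := by
    refine tendsto_nhds_unique (hρ₀.tendsto_comp (hf ξ) (hf η)) ?_
    refine (tendsto_iff_dist_tendsto_zero.2 ?_).mono_left hUl
    exact squeeze_zero (fun _ => dist_nonneg) (fun i => (hdist i ξ η).le) hδ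
  refine ⟨f, fun ζ => ?_, hiso⟩
  choose ξs xs hnear hxs using fun i => hnet i ζ
  obtain ⟨ξ, hξ⟩ : ∃ ξ, Tendsto ξs U (𝓝 ξ) := ⟨_, (U.map ξs).le_nhds_lim⟩
  obtain ⟨a, ha⟩ : ∃ a, Tendsto (fun i => F i (ξs i)) U (𝓝 a) :=
    ⟨_, (U.map fun i => F i (ξs i)).le_nhds_lim⟩
  obtain ⟨x, hx⟩ : ∃ x, Tendsto xs U (𝓝 x) := ⟨_, (U.map xs).le_nhds_lim⟩
  have hfξ : f ξ = a := by
    have hρ₀'ξ : Tendsto (fun i => ρ₀' ξ (ξs i)) U (𝓝 0) := by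
      simpa only [hρ₀'.self_eq_zero] using
        hρ₀'.tendsto_comp (tendsto_const_nhds (x := ξ)) hξ
    refine hρ₀.eq_of_tendsto_zero (hf ξ) ha (squeeze_zero (fun i => hρ₀.nonneg _ _)
      (fun i => ?_) (by simpa using hρ₀'ξ.add hδU))
    linarith [(abs_lt.1 (hdist i ξ (ξs i))).2]
  have hax : a = x := hρ₀.eq_of_tendsto_zero ha hx (tendsto_zero_of_lt hnear)
  have hxζ : x = ζ := hρ₀.eq_of_tendsto_zero hx tendsto_const_nhds (tendsto_zero_of_lt hxs)
  exact ⟨ξ, hfξ.trans (hax.trans hxζ)⟩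

theorem AI_limit_unique_up_to_isometry_general
    {Z : ℕ → Type u}
    (ρ : ∀ n, Z n → Z n → ℝ)
    {W : Type v} [TopologicalSpace W] [CompactSpace W]
    (ρ₀ : W → W → ℝ) (hρ₀ : IsSemiMetric ρ₀)
    {W' : Type v} [TopologicalSpace W'] [CompactSpace W']
    (ρ₀' : W' → W' → ℝ) (hρ₀' : IsSemiMetric ρ₀')
    (h : Tendsto (fun n => dAI (ρ n) ρ₀) atTop (𝓝 0))
    (h' : Tendsto (fun n => dAI (ρ n) ρ₀') atTop (𝓝 0)) :
    ∃ f : W' → W, Function.Surjective f ∧ ∀ ξ η : W', ρ₀ (f ξ) (f η) = ρ₀' ξ η := by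
  set ε : ℕ → ℝ := fun m => 1 / ((m : ℝ) + 1)
  have hε (m : ℕ) : 0 < ε m := by positivity
  have approx (m : ℕ) : ∃ F : W' → W, (∀ ξ η, |ρ₀ (F ξ) (F η) - ρ₀' ξ η| < 2 * ε m) ∧
      ∀ ζ, ∃ ξ x, ρ₀ (F ξ) x < 2 * ε m ∧ ρ₀ x ζ < 2 * ε m := by
    have hpos : (0 : ℝ≥0∞) < ENNReal.ofReal (ε m) := ENNReal.ofReal_pos.2 (hε m)
    obtain ⟨n, hn, hn'⟩ := ((h.eventually_lt_const hpos).and (h'.eventually_lt_const hpos)).exists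
    obtain ⟨⟨f, hf⟩, -⟩ := exists_isEpsIsometry_of_dAI_lt (hε m) hn
    obtain ⟨-, ⟨g, hg⟩⟩ := exists_isEpsIsometry_of_dAI_lt (hε m) hn'
    refine ⟨f ∘ g, hf.abs_comp_sub_lt hg, fun ζ => ?_⟩
    obtain ⟨ξ, x, hnear, hx⟩ := hf.exists_comp_near hg ζ
    exact ⟨ξ, x, hnear, by linarith [hε m]⟩
  choose F hdist hnet using approx
  have hδ : Tendsto (fun m => 2 * ε m) atTop (𝓝 0) := by
    simpa [ε] using (tendsto_one_div_add_atTop_nhds_zero_nat (𝕜 := ℝ)).const_mul 2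
  exact exists_surjective_isometry_of_approx hρ₀ hρ₀' hδ hdist hnet

/-- The AI-limit of a sequence of compact semi-metric spaces is unique up to
isometry. -/
theorem AI_limit_unique_up_to_isometry
    {Z : ℕ → Type u} [∀ n, TopologicalSpace (Z n)] [∀ n, CompactSpace (Z n)]
    [∀ n, TopologicalSpace.MetrizableSpace (Z n)]
    (ρ : ∀ n, Z n → Z n → ℝ) (hρ : ∀ n, IsSemiMetric (ρ n))
    {W : Type v} [TopologicalSpace W] [CompactSpace W] [TopologicalSpace.MetrizableSpace W]
    (ρ₀ : W → W → ℝ) (hρ₀ : IsSemiMetric ρ₀)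
    {W' : Type v} [TopologicalSpace W'] [CompactSpace W'] [TopologicalSpace.MetrizableSpace W']
    (ρ₀' : W' → W' → ℝ) (hρ₀' : IsSemiMetric ρ₀')
    (h : Tendsto (fun n => dAI (ρ n) ρ₀) atTop (𝓝 0))
    (h' : Tendsto (fun n => dAI (ρ n) ρ₀') atTop (𝓝 0)) :
    ∃ f : W' → W, Function.Surjective f ∧ ∀ ξ η : W', ρ₀ (f ξ) (f η) = ρ₀' ξ η :=
  AI_limit_unique_up_to_isometry_general ρ ρ₀ hρ₀ ρ₀' hρ₀' h h'
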